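/- arXiv:2605.09833 — 3 statements merged into one kernel-verified Lean document; each statement's English description precedes it below -/
import Mathlib

section
/- Fix q_X, q_Y ∈ (0, 1/2]. Define F(d) = (1-q_X) H_b(q_Y - q_X d) + q_X H_b(q_Y + (1-q_X) d) for all d such that both arguments lie in [0,1]. Then F is nonincreasing on the set of feasible d ≥ 0: for 0 ≤ d_1 ≤ d_2 with both feasible, F(d_2) ≤ F(d_1). -/
/-- Binary entropy function. -/
noncomputable def Hb (t : ℝ) : ℝ := -(t * Real.log t) - (1 - t) * Real.log (1 - t)

lemma hb_concave : ConcaveOn ℝ (Set.Icc (0:ℝ) 1) Hb := by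
  have h1 : ConcaveOn ℝ (Set.Ici (0:ℝ)) Real.negMulLog :=
    Real.strictConcaveOn_negMulLog.concaveOn
  have h2 : ConcaveOn ℝ (Set.Icc (0:ℝ) 1) Real.negMulLog :=
    h1.subset (fun x hx => hx.1) (convex_Icc _ _)
  have g : ℝ →ᵃ[ℝ] ℝ := AffineMap.lineMap (1:ℝ) (0:ℝ)
  have h3 : ConcaveOn ℝ ((AffineMap.lineMap (1:ℝ) (0:ℝ)) ⁻¹' Set.Ici (0:ℝ))
      (Real.negMulLog ∘ (AffineMap.lineMap (1:ℝ) (0:ℝ))) := h1.comp_affineMap _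
  have h4 : ConcaveOn ℝ (Set.Icc (0:ℝ) 1) (fun t => Real.negMulLog (1 - t)) := by
    refine (h3.subset ?_ (convex_Icc _ _)).congr ?_
    · intro x hx
      simp [AffineMap.lineMap_apply]
      linarith [hx.2]
    · intro x hx
      simp [AffineMap.lineMap_apply]
      ring_nf
  have := h2.add h4
  refine this.congr ?_
  intro x hx
  simp [Hb, Real.negMulLog]
  ring

theorem stmt_5 (qX qY : ℝ) (hX : qX ∈ Set.Ioc (0:ℝ) (1/2)) (hY : qY ∈ Set.Ioc (0:ℝ) (1/2))
    (F : ℝ → ℝ)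
    (hF : ∀ d, F d = (1 - qX) * Hb (qY - qX * d) + qX * Hb (qY + (1 - qX) * d))
    (d₁ d₂ : ℝ) (hd₁ : 0 ≤ d₁) (hle : d₁ ≤ d₂)
    (hfeas₁ : qY - qX * d₁ ∈ Set.Icc (0:ℝ) 1 ∧ qY + (1 - qX) * d₁ ∈ Set.Icc (0:ℝ) 1)
    (hfeas₂ : qY - qX * d₂ ∈ Set.Icc (0:ℝ) 1 ∧ qY + (1 - qX) * d₂ ∈ Set.Icc (0:ℝ) 1) :
    F d₂ ≤ F d₁ := by
  obtain ⟨hqX, hqX2⟩ := hX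
  rcases eq_or_lt_of_le hle with h | hlt
  · rw [h]
  have hd₂ : 0 < d₂ := lt_of_le_of_lt hd₁ hlt
  set t : ℝ := qX * (d₂ - d₁) / d₂ with ht
  set s : ℝ := ((1 - qX) * d₁ + qX * d₂) / d₂ with hs
  have hqX1 : qX ≤ 1 := by linarith
  have ht0 : 0 ≤ t := by
    rw [ht]; apply div_nonneg _ hd₂.le; nlinarith
  have ht1 : t ≤ 1 := by
    rw [ht, div_le_one hd₂]; nlinarith
  have hs0 : 0 ≤ s := by
    rw [hs]; apply div_nonneg _ hd₂.le; nlinarith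
  have hs1 : s ≤ 1 := by
    rw [hs, div_le_one hd₂]; nlinarith
  have ha₁ : qY - qX * d₁ = (1 - t) * (qY - qX * d₂) + t * (qY + (1 - qX) * d₂) := by
    rw [ht]; field_simp; ring
  have hb₁ : qY + (1 - qX) * d₁ = (1 - s) * (qY - qX * d₂) + s * (qY + (1 - qX) * d₂) := by
    rw [hs]; field_simp; ring
  have i1 : (1 - t) * Hb (qY - qX * d₂) + t * Hb (qY + (1 - qX) * d₂)
      ≤ Hb (qY - qX * d₁) := by
    have := hb_concave.2 hfeas₂.1 hfeas₂.2 (by linarith : (0:ℝ) ≤ 1 - t) ht0 (by ring)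
    simpa [smul_eq_mul, ← ha₁] using this
  have i2 : (1 - s) * Hb (qY - qX * d₂) + s * Hb (qY + (1 - qX) * d₂)
      ≤ Hb (qY + (1 - qX) * d₁) := by
    have := hb_concave.2 hfeas₂.1 hfeas₂.2 (by linarith : (0:ℝ) ≤ 1 - s) hs0 (by ring)
    simpa [smul_eq_mul, ← hb₁] using this
  have key : (1 - qX) * t + qX * s = qX := by
    rw [ht, hs]; field_simp; ring
  rw [hF d₁, hF d₂]
  set A := Hb (qY - qX * d₂)
  set B := Hb (qY + (1 - qX) * d₂)
  have i1' := mul_le_mul_of_nonneg_left i1 (by linarith : (0:ℝ) ≤ 1 - qX)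
  have i2' := mul_le_mul_of_nonneg_left i2 hqX.le
  have heq : (1 - qX) * A + qX * B
      = (1 - qX) * ((1 - t) * A + t * B) + qX * ((1 - s) * A + s * B) := by
    linear_combination (A - B) * key
  linarith
end

section
/- Fix q_X, q_Y ∈ (0, 1/2]. The function G(θ) = (1-q_X) H_b((q_Y - θ)/(1-q_X)) + q_X H_b(θ/q_X), defined for θ ∈ [max{0, q_X+q_Y-1}, min{q_X,q_Y}], attains its minimum at θ* = min{q_X, q_Y}. -/
open Real Set

lemma Hb_eq_binEntropy : Hb = binEntropy := by
  funext t
  rw [Hb, binEntropy, log_inv, log_inv]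
  ring

lemma ConcaveOn.comp_mul_add {f : ℝ → ℝ} {s : Set ℝ} (hf : ConcaveOn ℝ s f) (a b : ℝ) :
    ConcaveOn ℝ ((fun x => a * x + b) ⁻¹' s) (fun x => f (a * x + b)) := by
  have hline : (AffineMap.lineMap b (a + b) : ℝ → ℝ) = fun x => a * x + b := by
    funext x
    rw [AffineMap.lineMap_apply_ring']
    ring
  have h := hf.comp_affineMap (AffineMap.lineMap b (a + b))
  rwa [hline] at h

namespace Real

/-- The hypotheses say that `u ≤ 1/2` is at least as far from `1/2` as `v`. -/
lemma binEntropy_le_binEntropy_of_le_of_le_one_sub {u v : ℝ} (hu : 0 ≤ u) (huv : u ≤ v)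
    (huv' : u ≤ 1 - v) : binEntropy u ≤ binEntropy v := by
  have hu2 : u ≤ 2⁻¹ := by linarith
  rcases le_or_gt v 2⁻¹ with hv | hv
  · exact binEntropy_strictMonoOn.monotoneOn ⟨hu, hu2⟩ ⟨by linarith, hv⟩ huv
  · rw [← binEntropy_one_sub v]
    exact binEntropy_strictMonoOn.monotoneOn ⟨hu, hu2⟩ ⟨by linarith, by linarith⟩ huv'

lemma mul_binEntropy_div_le_mul_binEntropy_div {q p p' : ℝ} (hq : 0 ≤ q) (hqp : q ≤ p)
    (hpp' : p ≤ p') : p * binEntropy (q / p) ≤ p' * binEntropy (q / p') := by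
  rcases (hq.trans hqp).eq_or_lt with rfl | hp
  · simp [le_antisymm hqp hq]
  have hp' : 0 < p' := hp.trans_le hpp'
  -- `q / p'` is the convex combination of `q / p` and `0` with weights `p / p'` and `1 - p / p'`.
  have hconc := strictConcave_binEntropy.concaveOn.2
    (⟨div_nonneg hq hp.le, (div_le_one hp).2 hqp⟩ : q / p ∈ Icc (0 : ℝ) 1)
    (⟨le_rfl, zero_le_one⟩ : (0 : ℝ) ∈ Icc (0 : ℝ) 1)
    (div_nonneg hp.le hp'.le) (sub_nonneg.2 ((div_le_one hp').2 hpp')) (add_sub_cancel _ _)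
  have hcomb : (p / p') • (q / p) + (1 - p / p') • (0 : ℝ) = q / p' := by
    simp only [smul_eq_mul, mul_zero, add_zero]
    field_simp
  rw [hcomb, binEntropy_zero, smul_zero, add_zero, smul_eq_mul] at hconc
  calc p * binEntropy (q / p) = p' * (p / p' * binEntropy (q / p)) := by field_simp
    _ ≤ p' * binEntropy (q / p') := mul_le_mul_of_nonneg_left hconc hp'.le

end Real

/-- The conditional entropy `H(Y | X)` of the coupling of `Bern qX` and `Bern qY` with
`P(X = 1, Y = 1) = θ`. -/
noncomputable def couplingCondEntropy (qX qY θ : ℝ) : ℝ :=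
  (1 - qX) * binEntropy ((qY - θ) / (1 - qX)) + qX * binEntropy (θ / qX)

lemma concaveOn_couplingCondEntropy {qX : ℝ} (qY : ℝ) (hX₀ : 0 < qX) (hX₁ : qX < 1) :
    ConcaveOn ℝ (Icc (max 0 (qX + qY - 1)) (min qX qY)) (couplingCondEntropy qX qY) := by
  have hX₁' : 0 < 1 - qX := sub_pos.2 hX₁
  set S := Icc (max 0 (qX + qY - 1)) (min qX qY)
  have hmemY : ∀ θ ∈ S, -(1 - qX)⁻¹ * θ + qY / (1 - qX) ∈ Icc (0 : ℝ) 1 := by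
    rintro θ ⟨hθ₀, hθ₁⟩
    rw [max_le_iff] at hθ₀
    rw [le_min_iff] at hθ₁
    rw [show -(1 - qX)⁻¹ * θ + qY / (1 - qX) = (qY - θ) / (1 - qX) by ring]
    exact ⟨div_nonneg (by linarith) hX₁'.le, (div_le_one hX₁').2 (by linarith)⟩
  have hmemX : ∀ θ ∈ S, qX⁻¹ * θ + 0 ∈ Icc (0 : ℝ) 1 := by
    rintro θ ⟨hθ₀, hθ₁⟩
    rw [add_zero, ← div_eq_inv_mul]
    exact ⟨div_nonneg (le_max_left _ _ |>.trans hθ₀) hX₀.le,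
      (div_le_one hX₀).2 (hθ₁.trans (min_le_left _ _))⟩
  have hconcY := (strictConcave_binEntropy.concaveOn.comp_mul_add _ _).subset hmemY
    (convex_Icc _ _)
  have hconcX := (strictConcave_binEntropy.concaveOn.comp_mul_add _ _).subset hmemX
    (convex_Icc _ _)
  refine ((hconcY.smul hX₁'.le).add (hconcX.smul hX₀.le)).congr fun θ _ => ?_
  simp only [couplingCondEntropy, Pi.add_apply, smul_eq_mul]
  congr 3 <;> ring

lemma couplingCondEntropy_min_le_zero {qX qY : ℝ} (hX₀ : 0 < qX) (hX : qX ≤ 1 / 2)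
    (hY₀ : 0 ≤ qY) (hY : qY ≤ 1 / 2) :
    couplingCondEntropy qX qY (min qX qY) ≤ couplingCondEntropy qX qY 0 := by
  have hX₁ : 0 < 1 - qX := by linarith
  rcases le_or_gt qX qY with hXY | hYX
  · simp only [couplingCondEntropy, min_eq_left hXY, div_self hX₀.ne', sub_zero, zero_div,
      binEntropy_one, binEntropy_zero, mul_zero, add_zero]
    refine mul_le_mul_of_nonneg_left ?_ hX₁.le
    refine binEntropy_le_binEntropy_of_le_of_le_one_sub (div_nonneg (by linarith) hX₁.le)
      (div_le_div_of_nonneg_right (by linarith) hX₁.le) ?_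
    rw [one_sub_div hX₁.ne']
    exact div_le_div_of_nonneg_right (by linarith) hX₁.le
  · simp only [couplingCondEntropy, min_eq_right hYX.le, sub_self, sub_zero, zero_div,
      binEntropy_zero, mul_zero, zero_add, add_zero]
    exact mul_binEntropy_div_le_mul_binEntropy_div hY₀ hYX.le (by linarith)

theorem stmt_11 (qX qY : ℝ) (hX : qX ∈ Set.Ioc (0:ℝ) (1/2)) (hY : qY ∈ Set.Ioc (0:ℝ) (1/2))
    (G : ℝ → ℝ)
    (hG : ∀ θ, G θ = (1 - qX) * Hb ((qY - θ) / (1 - qX)) + qX * Hb (θ / qX)) :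
    ∀ θ ∈ Set.Icc (max 0 (qX + qY - 1)) (min qX qY), G (min qX qY) ≤ G θ := by
  obtain ⟨hX₀, hX⟩ := hX
  obtain ⟨hY₀, hY⟩ := hY
  have hG' : G = couplingCondEntropy qX qY := funext fun θ => by
    rw [hG, Hb_eq_binEntropy, couplingCondEntropy]
  have hconc := concaveOn_couplingCondEntropy qY hX₀ (by linarith)
  rw [max_eq_left (by linarith : qX + qY - 1 ≤ 0)] at hconc ⊢
  intro θ hθ
  have hm : 0 ≤ min qX qY := le_min hX₀.le hY₀.le
  rw [hG']
  calc couplingCondEntropy qX qY (min qX qY)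
      ≤ min (couplingCondEntropy qX qY 0) (couplingCondEntropy qX qY (min qX qY)) :=
        le_min (couplingCondEntropy_min_le_zero hX₀ hX hY₀.le hY) le_rfl
    _ ≤ couplingCondEntropy qX qY θ :=
        hconc.min_le_of_mem_Icc (left_mem_Icc.2 hm) (right_mem_Icc.2 hm) hθ
end

section
/- For q_X, q_Y ∈ (0, 1/2] with q_Y ≥ q_X, the maximum of H_b(q_Y) - (1-q_X)H_b((q_Y-θ)/(1-q_X)) - q_X H_b(θ/q_X) over θ in the Fréchet–Hoeffding interval equals H_b(q_Y) - (1-q_X) H_b((q_Y - q_X)/(1-q_X)). -/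
lemma Hb_eq : Hb = Real.binEntropy := by
  ext t
  simp only [Hb, Real.binEntropy, Real.log_inv]
  ring

lemma Hb_le_Hb {a b : ℝ} (ha : 0 ≤ a) (hab : a ≤ b) (hab' : a ≤ 1 - b) : Hb a ≤ Hb b := by
  rw [Hb_eq]
  rcases le_total b 2⁻¹ with h | h
  · exact Real.binEntropy_strictMonoOn.monotoneOn ⟨ha, hab.trans h⟩ ⟨ha.trans hab, h⟩ hab
  · rw [← Real.binEntropy_one_sub b]
    exact Real.binEntropy_strictMonoOn.monotoneOn ⟨ha, by linarith⟩ ⟨by linarith, by linarith⟩ hab'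

theorem stmt_13 (qX qY : ℝ) (hX : qX ∈ Set.Ioc (0:ℝ) (1/2)) (hY : qY ∈ Set.Ioc (0:ℝ) (1/2))
    (hge : qX ≤ qY) :
    IsGreatest
      ((fun θ : ℝ => Hb qY - (1 - qX) * Hb ((qY - θ) / (1 - qX)) - qX * Hb (θ / qX)) ''
        Set.Icc (max 0 (qX + qY - 1)) (min qX qY))
      (Hb qY - (1 - qX) * Hb ((qY - qX) / (1 - qX))) := by
  obtain ⟨hX0, hX2⟩ := hX
  obtain ⟨hY0, hY2⟩ := hY
  have hmax : max 0 (qX + qY - 1) = 0 := max_eq_left (by linarith)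
  have hmin : min qX qY = qX := min_eq_left hge
  have h1X : (0:ℝ) < 1 - qX := by linarith
  rw [hmax, hmin]
  constructor
  · refine ⟨qX, ⟨hX0.le, le_rfl⟩, ?_⟩
    have h1 : qX / qX = 1 := div_self hX0.ne'
    have h2 : Hb 1 = 0 := by simp [Hb]
    simp only [h1, h2]
    ring
  · rintro _ ⟨θ, ⟨hθ0, hθX⟩, rfl⟩
    simp only
    have hnn : 0 ≤ Hb (θ / qX) := by
      rw [Hb_eq]
      exact Real.binEntropy_nonneg (by positivity) ((div_le_one hX0).mpr hθX)
    have hkey : Hb ((qY - qX) / (1 - qX)) ≤ Hb ((qY - θ) / (1 - qX)) := by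
      apply Hb_le_Hb
      · exact div_nonneg (by linarith) h1X.le
      · gcongr
      · have h3 : (1:ℝ) - (qY - θ) / (1 - qX) = (1 - qX - (qY - θ)) / (1 - qX) := by
          field_simp
        rw [h3]
        exact div_le_div_of_nonneg_right (by linarith) h1X.le
    have h2 : (1 - qX) * Hb ((qY - qX) / (1 - qX)) ≤ (1 - qX) * Hb ((qY - θ) / (1 - qX)) :=
      mul_le_mul_of_nonneg_left hkey h1X.le
    nlinarith [mul_nonneg hX0.le hnn]
end
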